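/- arXiv:2007.06482 — 3 statements merged into one kernel-verified Lean document; each statement's English description precedes it below -/
import Mathlib

section
/- Let A₀ ∈ ℝ^{n×n} be stable with steady-state covariance Σ₀ satisfying Σ₀ = A₀ Σ₀ A₀ᵀ + I. Let c₀ ≥ ‖Σ₀^{1/2} A₀ᵀ‖₂ and let A₁ satisfy ‖Σ₀^{1/2}(A₀ − A₁)ᵀ‖₂ ≤ η c₀ with c₀² η(η+2) < 1. Then A₁ is stable. -/
/-!
`Σ₀` is a Lyapunov certificate for `A₁`. Writing `R = Σ₀^{1/2}`, `M = R A₀ᵀ` and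
`D = R (A₀ - A₁)ᵀ`, the steady-state equation gives
`yᵀ (Σ₀ - A₁ Σ₀ A₁ᵀ) y = ‖y‖² + ‖M y‖² - ‖M y - D y‖²`, and the triangle inequality with
`‖M‖ ≤ c₀`, `‖D‖ ≤ η c₀` bounds this below by `(1 - c₀² η (η + 2)) ‖y‖² > 0`. So
`Σ₀ - A₁ Σ₀ A₁ᵀ` is positive definite while `Σ₀ ⪰ 0`; evaluating both forms at a left
eigenvector `w` of `A₁` with eigenvalue `μ` gives `(1 - |μ|²) w* Σ₀ w > 0`, hence `|μ| < 1`.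
-/

open Matrix

noncomputable def sNorm {n : ℕ} (A : Matrix (Fin n) (Fin n) ℝ) : ℝ :=
  ‖Matrix.toEuclideanCLM (𝕜 := ℝ) A‖

open scoped ComplexOrder in
noncomputable def Matrix.PosSemidef.sqrt {𝕜 : Type*} [RCLike 𝕜] {m : Type*} [Fintype m]
    [DecidableEq m] {A : Matrix m m 𝕜} (hA : A.PosSemidef) : Matrix m m 𝕜 :=
  hA.1.eigenvectorUnitary.1 * diagonal ((↑) ∘ (√·) ∘ hA.1.eigenvalues) *
    (star hA.1.eigenvectorUnitary : Matrix m m 𝕜)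

open scoped ComplexOrder

theorem Matrix.PosSemidef.conjTranspose_sqrt_mul_sqrt {𝕜 : Type*} [RCLike 𝕜] {m : Type*}
    [Fintype m] [DecidableEq m] {A : Matrix m m 𝕜} (hA : A.PosSemidef) :
    hA.sqrtᴴ * hA.sqrt = A := by
  have hU : (star hA.1.eigenvectorUnitary : Matrix m m 𝕜) * hA.1.eigenvectorUnitary = 1 :=
    Unitary.coe_star_mul_self _
  conv_rhs => rw [hA.1.spectral_theorem, Unitary.conjStarAlgAut_apply]
  rw [PosSemidef.sqrt, conjTranspose_mul, conjTranspose_mul, diagonal_conjTranspose,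
    ← star_eq_conjTranspose, ← star_eq_conjTranspose, star_star]
  simp only [Matrix.mul_assoc]
  rw [← Matrix.mul_assoc _ _ (diagonal _ * _), hU, Matrix.one_mul,
    ← Matrix.mul_assoc (diagonal _), diagonal_mul_diagonal]
  congr 3
  funext i
  simp [RCLike.star_def, ← RCLike.ofReal_mul, Real.mul_self_sqrt (hA.eigenvalues_nonneg i)]

section Lyapunov

variable {𝕜 ι : Type*} [RCLike 𝕜] [Fintype ι] [DecidableEq ι]

theorem Matrix.exists_vecMul_eq_smul_of_mem_spectrum {A : Matrix ι ι 𝕜} {μ : 𝕜}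
    (hμ : μ ∈ spectrum 𝕜 A) : ∃ w ≠ 0, w ᵥ* A = μ • w := by
  rw [spectrum.mem_iff, isUnit_iff_isUnit_det, isUnit_iff_ne_zero, not_not] at hμ
  obtain ⟨w, hw0, hw⟩ := exists_vecMul_eq_zero_iff.mpr hμ
  refine ⟨w, hw0, ?_⟩
  rwa [vecMul_sub, sub_eq_zero, Algebra.algebraMap_eq_smul_one, vecMul_smul, vecMul_one,
    eq_comm] at hw

theorem Matrix.norm_lt_one_of_mem_spectrum_of_posDef_sub {A P : Matrix ι ι 𝕜}
    (hP : P.PosSemidef) (hAP : (P - A * P * Aᴴ).PosDef) {μ : 𝕜} (hμ : μ ∈ spectrum 𝕜 A) :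
    ‖μ‖ < 1 := by
  obtain ⟨w, hw0, hw⟩ := exists_vecMul_eq_smul_of_mem_spectrum hμ
  have hAw : Aᴴ *ᵥ star w = star μ • star w := by
    rw [← star_vecMul, hw, star_smul]
  have hAPA : w ⬝ᵥ ((A * P * Aᴴ) *ᵥ star w) = (‖μ‖ ^ 2 : ℝ) * (w ⬝ᵥ (P *ᵥ star w)) := by
    rw [← mulVec_mulVec, ← mulVec_mulVec, hAw, dotProduct_mulVec, hw, mulVec_smul,
      smul_dotProduct, dotProduct_smul, smul_eq_mul, smul_eq_mul, ← mul_assoc, RCLike.star_def,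
      RCLike.mul_conj, RCLike.ofReal_pow]
  have hpos := hAP.re_dotProduct_pos (x := star w) (by simpa using hw0)
  have hnonneg := hP.re_dotProduct_nonneg (star w)
  rw [star_star, sub_mulVec, dotProduct_sub, hAPA, ← one_sub_mul, ← RCLike.ofReal_one,
    ← RCLike.ofReal_sub, RCLike.re_ofReal_mul] at hpos
  rw [star_star] at hnonneg
  nlinarith [norm_nonneg μ, pos_of_mul_pos_left hpos hnonneg]

end Lyapunov

section Complexification

variable {ι : Type*}

theorem Matrix.IsHermitian.map_ofReal {M : Matrix ι ι ℝ} (hM : M.IsHermitian) :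
    (M.map (algebraMap ℝ ℂ)).IsHermitian := by
  rw [IsHermitian, ← conjTranspose_map _ (fun r ↦ by simp), hM]

variable [Fintype ι]

theorem Matrix.re_star_dotProduct_map_ofReal_mulVec (M : Matrix ι ι ℝ) (x : ι → ℂ) :
    (star x ⬝ᵥ (M.map (algebraMap ℝ ℂ) *ᵥ x)).re =
      (fun i ↦ (x i).re) ⬝ᵥ (M *ᵥ fun i ↦ (x i).re) +
        (fun i ↦ (x i).im) ⬝ᵥ (M *ᵥ fun i ↦ (x i).im) := by
  simp only [dotProduct, mulVec, Complex.re_sum, Finset.mul_sum, ← Finset.sum_add_distrib]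
  refine Finset.sum_congr rfl fun i _ ↦ Finset.sum_congr rfl fun j _ ↦ ?_
  simp only [Pi.star_apply, map_apply, Complex.coe_algebraMap, Complex.mul_re, Complex.star_def,
    Complex.conj_re, Complex.conj_im, Complex.ofReal_re, Complex.ofReal_im, Complex.mul_im]
  ring

theorem Matrix.PosSemidef.map_ofReal {M : Matrix ι ι ℝ} (hM : M.PosSemidef) :
    (M.map (algebraMap ℝ ℂ)).PosSemidef := by
  refine .of_dotProduct_mulVec_nonneg hM.isHermitian.map_ofReal fun x ↦
    Complex.nonneg_iff.mpr ⟨?_, ?_⟩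
  · rw [re_star_dotProduct_map_ofReal_mulVec]
    exact add_nonneg (by simpa using hM.dotProduct_mulVec_nonneg _)
      (by simpa using hM.dotProduct_mulVec_nonneg _)
  · exact (hM.isHermitian.map_ofReal.im_star_dotProduct_mulVec_self x).symm

theorem Matrix.PosDef.map_ofReal {M : Matrix ι ι ℝ} (hM : M.PosDef) :
    (M.map (algebraMap ℝ ℂ)).PosDef := by
  refine .of_dotProduct_mulVec_pos hM.isHermitian.map_ofReal fun x hx ↦
    Complex.lt_def.mpr ⟨?_, ?_⟩
  · have hnonneg (y : ι → ℝ) : 0 ≤ y ⬝ᵥ (M *ᵥ y) := by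
      simpa using hM.posSemidef.dotProduct_mulVec_nonneg y
    have hpos {y : ι → ℝ} (hy : y ≠ 0) : 0 < y ⬝ᵥ (M *ᵥ y) := by
      simpa using hM.dotProduct_mulVec_pos hy
    rw [Complex.zero_re, re_star_dotProduct_map_ofReal_mulVec]
    by_cases hre : (fun i ↦ (x i).re) = 0
    · have him : (fun i ↦ (x i).im) ≠ 0 := fun him ↦
        hx (funext fun i ↦ Complex.ext (congrFun hre i) (congrFun him i))
      exact add_pos_of_nonneg_of_pos (hnonneg _) (hpos him)
    · exact add_pos_of_pos_of_nonneg (hpos hre) (hnonneg _)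
  · exact (hM.isHermitian.map_ofReal.im_star_dotProduct_mulVec_self x).symm

theorem Matrix.norm_lt_one_of_mem_spectrum_map_of_posDef_sub [DecidableEq ι]
    {A P : Matrix ι ι ℝ} (hP : P.PosSemidef) (hAP : (P - A * P * Aᵀ).PosDef) {μ : ℂ}
    (hμ : μ ∈ spectrum ℂ (A.map (algebraMap ℝ ℂ))) : ‖μ‖ < 1 := by
  have hmap : (P - A * P * Aᵀ).map (algebraMap ℝ ℂ) =
      P.map (algebraMap ℝ ℂ) - A.map (algebraMap ℝ ℂ) * P.map (algebraMap ℝ ℂ) *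
        (A.map (algebraMap ℝ ℂ))ᴴ := by
    rw [Matrix.map_sub _ (map_sub _), Matrix.map_mul, Matrix.map_mul,
      ← conjTranspose_map _ (fun r ↦ by simp), conjTranspose_eq_transpose_of_trivial]
  exact norm_lt_one_of_mem_spectrum_of_posDef_sub hP.map_ofReal (hmap ▸ hAP.map_ofReal) hμ

end Complexification

theorem norm_sub_sq_lt_of_le {E : Type*} [SeminormedAddCommGroup E] {u w : E} {t c η : ℝ}
    (ht : 0 < t) (hu : ‖u‖ ≤ c * t) (hw : ‖w‖ ≤ η * c * t) (hsmall : c ^ 2 * (η * (η + 2)) < 1) :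
    ‖u - w‖ ^ 2 < t ^ 2 + ‖u‖ ^ 2 := by
  have hηc : 0 ≤ η * c := nonneg_of_mul_nonneg_left ((norm_nonneg w).trans hw) ht
  calc ‖u - w‖ ^ 2 ≤ ‖u‖ ^ 2 + ‖w‖ * (2 * ‖u‖ + ‖w‖) := by
        nlinarith [norm_sub_le u w, norm_nonneg (u - w)]
    _ ≤ ‖u‖ ^ 2 + η * c * t * (2 * (c * t) + η * c * t) := by gcongr
    _ = ‖u‖ ^ 2 + c ^ 2 * (η * (η + 2)) * t ^ 2 := by ring
    _ < t ^ 2 + ‖u‖ ^ 2 := by nlinarith [pow_pos ht 2]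

section SpectralNorm

theorem dotProduct_self_eq_norm_toLp_sq {ι : Type*} [Fintype ι] (y : ι → ℝ) :
    y ⬝ᵥ y = ‖WithLp.toLp 2 y‖ ^ 2 := by
  rw [EuclideanSpace.real_norm_sq_eq]
  simp [dotProduct, sq]

theorem Matrix.dotProduct_transpose_mul_mulVec_self {m ι : Type*} [Fintype m] [Fintype ι]
    (M : Matrix m ι ℝ) (y : ι → ℝ) : y ⬝ᵥ ((Mᵀ * M) *ᵥ y) = ‖WithLp.toLp 2 (M *ᵥ y)‖ ^ 2 := by
  rw [← mulVec_mulVec, dotProduct_mulVec, vecMul_transpose, dotProduct_self_eq_norm_toLp_sq]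

variable {n : ℕ}

theorem norm_toLp_mulVec_le_sNorm_mul (M : Matrix (Fin n) (Fin n) ℝ) (y : Fin n → ℝ) :
    ‖WithLp.toLp 2 (M *ᵥ y)‖ ≤ sNorm M * ‖WithLp.toLp 2 y‖ :=
  (toEuclideanCLM (𝕜 := ℝ) M).le_opNorm _

theorem posDef_sub_mul_mul_transpose_of_sNorm_le {S R A₀ A₁ : Matrix (Fin n) (Fin n) ℝ}
    {c η : ℝ} (hS : S = A₀ * S * A₀ᵀ + 1) (hR : S = Rᵀ * R) (hc : sNorm (R * A₀ᵀ) ≤ c)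
    (hη : sNorm (R * (A₀ - A₁)ᵀ) ≤ η * c) (hsmall : c ^ 2 * (η * (η + 2)) < 1) :
    (S - A₁ * S * A₁ᵀ).PosDef := by
  have hgram (A : Matrix (Fin n) (Fin n) ℝ) : A * S * Aᵀ = (R * Aᵀ)ᵀ * (R * Aᵀ) := by
    rw [hR, transpose_mul, transpose_transpose]
    simp only [Matrix.mul_assoc]
  have hsymm : (S - A₁ * S * A₁ᵀ).IsHermitian := by
    have hgram_symm (M : Matrix (Fin n) (Fin n) ℝ) : (Mᵀ * M).IsHermitian := by
      simpa only [conjTranspose_eq_transpose_of_trivial] using isHermitian_conjTranspose_mul_self M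
    rw [hgram, hR]
    exact (hgram_symm R).sub (hgram_symm _)
  have hA₁ : R * A₁ᵀ = R * A₀ᵀ - R * (A₀ - A₁)ᵀ := by
    rw [transpose_sub, Matrix.mul_sub, sub_sub_cancel]
  refine .of_dotProduct_mulVec_pos hsymm fun y hy ↦ ?_
  have hquad : y ⬝ᵥ ((S - A₁ * S * A₁ᵀ) *ᵥ y) = ‖WithLp.toLp 2 y‖ ^ 2 +
      ‖WithLp.toLp 2 ((R * A₀ᵀ) *ᵥ y)‖ ^ 2 -
      ‖WithLp.toLp 2 ((R * A₀ᵀ) *ᵥ y) - WithLp.toLp 2 ((R * (A₀ - A₁)ᵀ) *ᵥ y)‖ ^ 2 := by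
    nth_rewrite 1 [hS]
    rw [add_sub_right_comm, add_mulVec, dotProduct_add, sub_mulVec, dotProduct_sub, hgram, hgram,
      dotProduct_transpose_mul_mulVec_self, dotProduct_transpose_mul_mulVec_self, hA₁, sub_mulVec,
      WithLp.toLp_sub, one_mulVec, dotProduct_self_eq_norm_toLp_sq]
    ring
  rw [star_trivial, hquad, sub_pos]
  refine norm_sub_sq_lt_of_le (by simpa using hy) ((norm_toLp_mulVec_le_sNorm_mul _ y).trans ?_)
    ((norm_toLp_mulVec_le_sNorm_mul _ y).trans ?_) hsmall <;> gcongr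

end SpectralNorm

theorem stmt4_general {n : ℕ} (A₀ A₁ S₀ : Matrix (Fin n) (Fin n) ℝ)
    (hS₀psd : S₀.PosSemidef)
    (hS₀ : S₀ = A₀ * S₀ * A₀ᵀ + 1)
    (c₀ η : ℝ)
    (hc₀ : sNorm (hS₀psd.sqrt * A₀ᵀ) ≤ c₀)
    (hpert : sNorm (hS₀psd.sqrt * (A₀ - A₁)ᵀ) ≤ η * c₀)
    (hsmall : c₀ ^ 2 * (η * (η + 2)) < 1) :
    ∀ μ ∈ spectrum ℂ (A₁.map (algebraMap ℝ ℂ)), ‖μ‖ < 1 := by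
  have hR : S₀ = hS₀psd.sqrtᵀ * hS₀psd.sqrt := by
    rw [← conjTranspose_eq_transpose_of_trivial, hS₀psd.conjTranspose_sqrt_mul_sqrt]
  exact fun μ ↦ norm_lt_one_of_mem_spectrum_map_of_posDef_sub hS₀psd
    (posDef_sub_mul_mul_transpose_of_sNorm_le hS₀ hR hc₀ hpert hsmall)

/-- Perturbation of stability in a Lyapunov metric: if `A₀` is stable with steady-state
covariance `Σ₀ = A₀Σ₀A₀ᵀ + I`, `c₀ ≥ ‖Σ₀^{1/2}A₀ᵀ‖₂`, and `A₁` satisfies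
`‖Σ₀^{1/2}(A₀ − A₁)ᵀ‖₂ ≤ ηc₀` with `c₀²η(η+2) < 1`, then `A₁` is stable. -/
theorem stmt4 {n : ℕ} (A₀ A₁ S₀ : Matrix (Fin n) (Fin n) ℝ)
    (hstab : ∀ μ ∈ spectrum ℂ (A₀.map (algebraMap ℝ ℂ)), ‖μ‖ < 1)
    (hS₀psd : S₀.PosSemidef)
    (hS₀ : S₀ = A₀ * S₀ * A₀ᵀ + 1)
    (c₀ η : ℝ)
    (hc₀ : sNorm (hS₀psd.sqrt * A₀ᵀ) ≤ c₀)
    (hpert : sNorm (hS₀psd.sqrt * (A₀ - A₁)ᵀ) ≤ η * c₀)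
    (hsmall : c₀ ^ 2 * (η * (η + 2)) < 1) :
    ∀ μ ∈ spectrum ℂ (A₁.map (algebraMap ℝ ℂ)), ‖μ‖ < 1 :=
  stmt4_general A₀ A₁ S₀ hS₀psd hS₀ c₀ η hc₀ hpert hsmall
end

section
/- For symmetric positive definite matrices X, Y with X ⪰ Y ≻ 0, the ratio of determinants satisfies det(Y)/det(X) ≤ inf over nonzero vectors x of (xᵀYx)/(xᵀXx). In particular, det(Y)/det(X) ≤ (vᵀYv)/(vᵀXv) for any nonzero vector v. -/
/-!
Write `X = Bᴴ B` with `B = √X` invertible. Then `Z = B⁻ᴴ Y B⁻¹` satisfies `0 ⪯ Z ⪯ 1` and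
`det Z = det Y / det X`. The eigenvalues of `Z` lie in `[0, 1]`, so their product `det Z` is at most
the smallest of them, i.e. `det Z • 1 ⪯ Z`. Conjugating back gives `(det Y / det X) • X ⪯ Y`, and
evaluating both quadratic forms at `v` gives the claim.
-/

open Matrix Finset
open scoped MatrixOrder ComplexOrder

lemma Finset.prod_le_of_mem_of_le_one {ι R : Type*} [CommMonoidWithZero R] [PartialOrder R]
    [ZeroLEOneClass R] [PosMulMono R] {s : Finset ι} {f : ι → R}
    (h0 : ∀ i ∈ s, 0 ≤ f i) (h1 : ∀ i ∈ s, f i ≤ 1) {j : ι} (hj : j ∈ s) :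
    ∏ i ∈ s, f i ≤ f j := by
  classical
  rw [← mul_prod_erase s f hj]
  exact mul_le_of_le_one_right (h0 j hj)
    (prod_le_one (fun i hi => h0 i (mem_of_mem_erase hi)) fun i hi => h1 i (mem_of_mem_erase hi))

namespace Matrix

variable {𝕜 n : Type*} [RCLike 𝕜] [Fintype n]

lemma dotProduct_mulVec_le_of_le {A B : Matrix n n 𝕜} (hAB : A ≤ B) (v : n → 𝕜) :
    star v ⬝ᵥ (A *ᵥ v) ≤ star v ⬝ᵥ (B *ᵥ v) := by
  simpa only [sub_mulVec, dotProduct_sub, sub_nonneg] using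
    (le_iff.mp hAB).dotProduct_mulVec_nonneg v

variable [DecidableEq n]

lemma PosSemidef.det_smul_one_le {Z : Matrix n n 𝕜} (hZ : Z.PosSemidef) (hZ1 : Z ≤ 1) :
    Z.det • (1 : Matrix n n 𝕜) ≤ Z := by
  set e := hZ.isHermitian.eigenvalues
  have he1 : ∀ i, e i ≤ 1 := fun i =>
    (le_algebraMap_iff_spectrum_le (R := ℝ)).mp (by rwa [map_one]) _
      (hZ.isHermitian.eigenvalues_mem_spectrum_real i)
  have hprod : algebraMap ℝ (Matrix n n 𝕜) (∏ i, e i) ≤ Z := by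
    rw [algebraMap_le_iff_le_spectrum, hZ.isHermitian.spectrum_real_eq_range_eigenvalues]
    rintro _ ⟨j, rfl⟩
    exact prod_le_of_mem_of_le_one (fun i _ => hZ.eigenvalues_nonneg i) (fun i _ => he1 i)
      (mem_univ j)
  rwa [hZ.isHermitian.det_eq_prod_eigenvalues, ← RCLike.ofReal_prod,
    ← RCLike.real_smul_eq_coe_smul, ← Algebra.algebraMap_eq_smul_one]

lemma PosDef.exists_isUnit_eq_star_mul_self {X : Matrix n n 𝕜} (hX : X.PosDef) :
    ∃ B : Matrix n n 𝕜, IsUnit B ∧ X = star B * B := by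
  refine ⟨CFC.sqrt X, (isStrictlyPositive_iff_posDef.mpr hX).isUnit_cfcSqrt, ?_⟩
  rw [(CFC.sqrt_nonneg X).isSelfAdjoint.star_eq, CFC.sqrt_mul_sqrt_self X]

lemma PosDef.det_div_det_smul_le {X Y : Matrix n n 𝕜} (hX : X.PosDef) (hY : Y.PosSemidef)
    (hYX : Y ≤ X) : (Y.det / X.det) • X ≤ Y := by
  obtain ⟨_, ⟨u, rfl⟩, rfl⟩ := hX.exists_isUnit_eq_star_mul_self
  set B : Matrix n n 𝕜 := ↑u
  set C : Matrix n n 𝕜 := ↑u⁻¹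
  set Z := star C * Y * C
  have hZ : Z.PosSemidef := by
    simpa only [Z, star_eq_conjTranspose] using hY.conjTranspose_mul_mul_same C
  have hZ1 : Z ≤ 1 :=
    calc Z ≤ star C * (star B * B) * C := star_left_conjugate_le_conjugate hYX C
      _ = star (B * C) * (B * C) := by simp only [star_mul, mul_assoc]
      _ = 1 := by rw [u.mul_inv, star_one, one_mul]
  have hBZB : star B * Z * B = Y :=
    calc star B * Z * B = star (C * B) * Y * (C * B) := by simp only [Z, star_mul, mul_assoc]
      _ = Y := by rw [u.inv_mul, star_one, one_mul, mul_one]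
  clear_value Z
  have hdetZ : Z.det = Y.det / (star B * B).det := by
    rw [eq_div_iff hX.det_pos.ne', ← hBZB, det_mul, det_mul, det_mul]
    ring
  calc (Y.det / (star B * B).det) • (star B * B) = star B * (Z.det • 1) * B := by
        rw [hdetZ, mul_smul_comm, mul_one, smul_mul_assoc]
    _ ≤ star B * Z * B := star_left_conjugate_le_conjugate (hZ.det_smul_one_le hZ1) B
    _ = Y := hBZB

end Matrix

/-- For symmetric positive definite matrices `X, Y` with `X ⪰ Y ≻ 0`, the determinant
ratio satisfies `det(Y)/det(X) ≤ (xᵀYx)/(xᵀXx)` for every nonzero vector `x`. -/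
theorem stmt9 {m : ℕ} (X Y : Matrix (Fin m) (Fin m) ℝ)
    (hX : X.PosDef) (hY : Y.PosDef) (hXY : (X - Y).PosSemidef) :
    ∀ v : Fin m → ℝ, v ≠ 0 →
      Y.det / X.det ≤ (v ⬝ᵥ Y.mulVec v) / (v ⬝ᵥ X.mulVec v) := by
  intro v hv
  have hvXv : 0 < v ⬝ᵥ X *ᵥ v := by simpa only [star_trivial] using hX.dotProduct_mulVec_pos hv
  rw [le_div_iff₀ hvXv]
  simpa only [star_trivial, smul_mulVec, dotProduct_smul, smul_eq_mul] using
    dotProduct_mulVec_le_of_le (hX.det_div_det_smul_le hY.posSemidef (le_iff.mpr hXY)) v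
end

section
/- Let A be a stable matrix with steady-state covariance Σ solving Σ = A Σ Aᵀ + I. If Tr(Σ) ≤ κ for some κ ≥ 1, then ρ(A)² ≤ 1 − 1/κ. -/
/-!
If `μ` is an eigenvalue of `A` with left eigenvector `w` (so `w⋆ A = μ w⋆`), evaluating the
Lyapunov equation `S = A S Aᴴ + 1` on `w` gives `w⋆ S w = |μ|² w⋆ S w + |w|²`, that is
`(1 - |μ|²) w⋆ S w = |w|²`. Writing `S = Bᴴ B`, Cauchy–Schwarz on the rows of `B` gives
`w⋆ S w ≤ Tr(S) |w|²`, hence `1 ≤ (1 - |μ|²) Tr(S) ≤ (1 - |μ|²) κ`. A real `A` is handled by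
passing to its complexification.
-/

open Matrix RCLike
open scoped ComplexOrder

namespace Matrix

variable {m n : Type*} [Fintype n]

theorem exists_vecMul_eq_smul_of_mem_spectrum_s12 [DecidableEq n] {K : Type*} [Field K]
    {A : Matrix n n K} {μ : K} (hμ : μ ∈ spectrum K A) : ∃ v : n → K, v ≠ 0 ∧ v ᵥ* A = μ • v := by
  rw [mem_spectrum_iff_isRoot_charpoly, ← charpoly_transpose, ← mem_spectrum_iff_isRoot_charpoly,
    ← spectrum_toLin', ← Module.End.hasEigenvalue_iff_mem_spectrum] at hμ
  obtain ⟨v, hv⟩ := hμ.exists_hasEigenvector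
  exact ⟨v, hv.2, by simpa [mulVec_transpose] using hv.apply_eq_smul⟩

variable {𝕜 : Type*} [RCLike 𝕜]

lemma re_star_dotProduct_self (x : n → 𝕜) : re (star x ⬝ᵥ x) = ∑ i, ‖x i‖ ^ 2 := by
  simp [dotProduct, RCLike.conj_mul]

lemma re_trace_conjTranspose_mul_self [Fintype m] (B : Matrix m n 𝕜) :
    re (Bᴴ * B).trace = ∑ i, ∑ j, ‖B i j‖ ^ 2 := by
  rw [Finset.sum_comm]
  simp [trace, mul_apply, RCLike.conj_mul]

lemma norm_mulVec_apply_sq_le (B : Matrix m n 𝕜) (x : n → 𝕜) (i : m) :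
    ‖(B *ᵥ x) i‖ ^ 2 ≤ (∑ j, ‖B i j‖ ^ 2) * ∑ j, ‖x j‖ ^ 2 :=
  calc ‖(B *ᵥ x) i‖ ^ 2 ≤ (∑ j, ‖B i j‖ * ‖x j‖) ^ 2 := by
        gcongr
        exact (norm_sum_le _ _).trans_eq (by simp)
    _ ≤ _ := Finset.sum_mul_sq_le_sq_mul_sq _ _ _

variable [DecidableEq n]

theorem PosSemidef.re_dotProduct_mulVec_le {S : Matrix n n 𝕜} (hS : S.PosSemidef) (x : n → 𝕜) :
    re (star x ⬝ᵥ (S *ᵥ x)) ≤ re S.trace * re (star x ⬝ᵥ x) := by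
  open scoped MatrixOrder in
  obtain ⟨B, rfl⟩ := CStarAlgebra.nonneg_iff_eq_star_mul_self.mp hS.nonneg
  rw [star_eq_conjTranspose, ← mulVec_mulVec, dotProduct_mulVec, ← star_mulVec,
    re_star_dotProduct_self, re_trace_conjTranspose_mul_self, re_star_dotProduct_self,
    Finset.sum_mul]
  exact Finset.sum_le_sum fun i _ => norm_mulVec_apply_sq_le B x i

theorem one_le_one_sub_norm_sq_mul_re_trace {A S : Matrix n n 𝕜} (hS : S.PosSemidef)
    (hlyap : S = A * S * Aᴴ + 1) {μ : 𝕜} (hμ : μ ∈ spectrum 𝕜 A) :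
    1 ≤ (1 - ‖μ‖ ^ 2) * re S.trace := by
  obtain ⟨v, hv0, hv⟩ := exists_vecMul_eq_smul_of_mem_spectrum_s12 hμ
  set w := star v
  have hwA : star w ᵥ* A = μ • star w := by rwa [star_star]
  have hAw : Aᴴ *ᵥ w = star μ • w := by rw [← star_vecMul, hv, star_smul]
  have hquad : star w ⬝ᵥ (S *ᵥ w) = (‖μ‖ ^ 2 : 𝕜) * (star w ⬝ᵥ (S *ᵥ w)) + star w ⬝ᵥ w := by
    conv_lhs => rw [hlyap]
    rw [add_mulVec, one_mulVec, dotProduct_add, ← mulVec_mulVec, ← mulVec_mulVec, hAw,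
      dotProduct_mulVec, hwA, mulVec_smul, smul_dotProduct, dotProduct_smul, smul_eq_mul,
      smul_eq_mul, ← mul_assoc, RCLike.star_def, RCLike.mul_conj]
  set q := re (star w ⬝ᵥ (S *ᵥ w))
  set s := re (star w ⬝ᵥ w)
  have hq : q = ‖μ‖ ^ 2 * q + s := by
    simpa [q, s, RCLike.re_ofReal_mul] using congrArg re hquad
  have hq0 : 0 ≤ q := hS.re_dotProduct_nonneg w
  have hs : 0 < s :=
    (RCLike.pos_iff.mp (dotProduct_star_self_pos_iff.mpr (star_ne_zero.mpr hv0))).1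
  have hμ1 : 0 < 1 - ‖μ‖ ^ 2 := pos_of_mul_pos_left (by linarith : 0 < (1 - ‖μ‖ ^ 2) * q) hq0
  refine le_of_mul_le_mul_right ?_ hs
  calc 1 * s = (1 - ‖μ‖ ^ 2) * q := by linarith
    _ ≤ (1 - ‖μ‖ ^ 2) * (re S.trace * s) := by gcongr; exact hS.re_dotProduct_mulVec_le w
    _ = (1 - ‖μ‖ ^ 2) * re S.trace * s := by ring

omit [Fintype n] [DecidableEq n] in
lemma conjTranspose_map_algebraMap (A : Matrix m n ℝ) :
    (A.map (algebraMap ℝ 𝕜))ᴴ = Aᵀ.map (algebraMap ℝ 𝕜) := by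
  ext i j
  simp

theorem PosSemidef.map_algebraMap {S : Matrix n n ℝ} (hS : S.PosSemidef) :
    (S.map (algebraMap ℝ 𝕜)).PosSemidef := by
  open scoped MatrixOrder in
  obtain ⟨B, rfl⟩ := CStarAlgebra.nonneg_iff_eq_star_mul_self.mp hS.nonneg
  rw [star_eq_conjTranspose, conjTranspose_eq_transpose_of_trivial, ← RingHom.mapMatrix_apply,
    map_mul, RingHom.mapMatrix_apply, RingHom.mapMatrix_apply, ← conjTranspose_map_algebraMap]
  exact posSemidef_conjTranspose_mul_self _

theorem one_le_one_sub_norm_sq_mul_trace_of_real {A S : Matrix n n ℝ} (hS : S.PosSemidef)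
    (hlyap : S = A * S * Aᵀ + 1) {μ : 𝕜} (hμ : μ ∈ spectrum 𝕜 (A.map (algebraMap ℝ 𝕜))) :
    1 ≤ (1 - ‖μ‖ ^ 2) * S.trace := by
  have hlyap𝕜 : S.map (algebraMap ℝ 𝕜) =
      A.map (algebraMap ℝ 𝕜) * S.map (algebraMap ℝ 𝕜) * (A.map (algebraMap ℝ 𝕜))ᴴ + 1 := by
    have h := congrArg (algebraMap ℝ 𝕜).mapMatrix hlyap
    rwa [map_add, map_mul, map_mul, map_one, RingHom.mapMatrix_apply, RingHom.mapMatrix_apply,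
      RingHom.mapMatrix_apply, ← conjTranspose_map_algebraMap] at h
  simpa [trace] using one_le_one_sub_norm_sq_mul_re_trace hS.map_algebraMap hlyap𝕜 hμ

end Matrix

theorem spectralRadius_toReal_le_of_forall_norm_le {𝕜 A : Type*} [NormedField 𝕜] [Ring A]
    [Algebra 𝕜 A] {a : A} {r : ℝ} (hr : 0 ≤ r) (h : ∀ μ ∈ spectrum 𝕜 a, ‖μ‖ ≤ r) :
    (spectralRadius 𝕜 a).toReal ≤ r :=
  ENNReal.toReal_le_of_le_ofReal hr <| iSup₂_le fun μ hμ => by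
    rw [← enorm_eq_nnnorm, ← ofReal_norm]
    exact ENNReal.ofReal_le_ofReal (h μ hμ)

theorem stmt12_general {n : ℕ} (A S : Matrix (Fin n) (Fin n) ℝ) (κ : ℝ)
    (hSpd : S.PosDef) (hS : S = A * S * Aᵀ + 1)
    (hκ : 1 ≤ κ) (htr : S.trace ≤ κ) :
    ((spectralRadius ℂ (A.map (algebraMap ℝ ℂ))).toReal) ^ 2 ≤ 1 - 1 / κ := by
  have hκ0 : 0 < κ := one_pos.trans_le hκ
  have hbound : ∀ μ ∈ spectrum ℂ (A.map (algebraMap ℝ ℂ)), ‖μ‖ ≤ √(1 - 1 / κ) := by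
    intro μ hμ
    have h := Matrix.one_le_one_sub_norm_sq_mul_trace_of_real hSpd.posSemidef hS hμ
    have hμ1 : 0 < 1 - ‖μ‖ ^ 2 :=
      pos_of_mul_pos_left (one_pos.trans_le h) hSpd.posSemidef.trace_nonneg
    refine Real.le_sqrt_of_sq_le ?_
    rw [le_sub_comm, div_le_iff₀ hκ0]
    exact h.trans (mul_le_mul_of_nonneg_left htr hμ1.le)
  calc (spectralRadius ℂ (A.map (algebraMap ℝ ℂ))).toReal ^ 2 ≤ √(1 - 1 / κ) ^ 2 := by
        gcongr
        exact spectralRadius_toReal_le_of_forall_norm_le (Real.sqrt_nonneg _) hbound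
    _ = 1 - 1 / κ := Real.sq_sqrt (by rw [sub_nonneg, div_le_one hκ0]; exact hκ)

/-- Let `A` be stable with steady-state covariance `Σ = AΣAᵀ + I`.
If `Tr(Σ) ≤ κ` for some `κ ≥ 1`, then `ρ(A)² ≤ 1 − 1/κ`. -/
theorem stmt12 {n : ℕ} (A S : Matrix (Fin n) (Fin n) ℝ) (κ : ℝ)
    (hstab : ∀ μ ∈ spectrum ℂ (A.map (algebraMap ℝ ℂ)), ‖μ‖ < 1)
    (hSpd : S.PosDef) (hS : S = A * S * Aᵀ + 1)
    (hκ : 1 ≤ κ) (htr : S.trace ≤ κ) :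
    ((spectralRadius ℂ (A.map (algebraMap ℝ ℂ))).toReal) ^ 2 ≤ 1 - 1 / κ :=
  stmt12_general A S κ hSpd hS hκ htr
end
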